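/- For every n ≥ 1, Σ_{F ∈ PF(n)} ∏_{v ∈ F} B_{h_v} = (-1)^n / (n+1)!, where B_m denotes the m-th Bernoulli number (with B_1 = −1/2) and PF(n) is the set of plane forests with n vertices. -/

import Mathlib

/-- Plane trees: nonempty rooted trees whose subtrees at each vertex are linearly ordered. -/
inductive PTree : Type
  | node : List PTree → PTree

namespace PTree

mutual
/-- The number of vertices of a plane tree. -/
def size : PTree → ℕ
  | .node cs => sizeList cs + 1
/-- The total number of vertices of a plane forest (a list of plane trees). -/
def sizeList : List PTree → ℕ
  | [] => 0
  | t :: ts => size t + sizeList ts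
end

mutual
/-- The multiset of hook lengths of a plane tree: the hook length of a vertex
is the number of its descendants, counting the vertex itself. -/
def hooks : PTree → Multiset ℕ+
  | .node cs => ⟨sizeList cs + 1, Nat.succ_pos _⟩ ::ₘ hooksList cs
/-- The multiset of hook lengths of a plane forest. -/
def hooksList : List PTree → Multiset ℕ+
  | [] => 0
  | t :: ts => hooks t + hooksList ts
end

end PTree

/-!
Removing the first tree of a forest leaves the forest of its root's children and the forest of
the remaining trees, and the root's hook length is the size of that first tree. Hence the sums
`W n` of the weights satisfy `W 0 = 1` and `W (n + 1) = ∑_{i + j = n} B_{i+1} W i W j`. The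
sequence `(-1)^n / (n + 1)!` satisfies the same recursion: after multiplying by `(n + 2)!` this is
the defining identity `∑_{k < n + 2} C(n + 2, k) B_k = 0` of the Bernoulli numbers.
-/

open Finset Nat

theorem sum_antidiagonal_bernoulli_succ_div_factorial (n : ℕ) :
    ∑ p ∈ antidiagonal n, bernoulli (p.1 + 1) / ((p.1 + 1)! * (p.2 + 1)! : ℚ) =
      -1 / (n + 2)! := by
  have hB := sum_bernoulli (n + 2)
  rw [sum_range_succ', ← Nat.sum_antidiagonal_eq_sum_range_succ
    (fun i j => ((n + 2).choose (i + 1) : ℚ) * bernoulli (i + 1))] at hB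
  have hchoose : ∀ p ∈ antidiagonal n, ((n + 2).choose (p.1 + 1) : ℚ) * bernoulli (p.1 + 1) =
      (n + 2)! * (bernoulli (p.1 + 1) / ((p.1 + 1)! * (p.2 + 1)!)) := by
    intro p hp
    have h := add_choose_mul_factorial_mul_factorial (p.2 + 1) (p.1 + 1)
    rw [show p.2 + 1 + (p.1 + 1) = n + 2 by rw [← mem_antidiagonal.mp hp]; ring] at h
    rw [← h]
    push_cast
    field_simp
  rw [sum_congr rfl hchoose, ← mul_sum] at hB
  rw [if_neg (by omega), choose_zero_right, cast_one, bernoulli_zero, mul_one] at hB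
  field_simp
  linarith

namespace PTree

@[simp]
theorem sizeList_nil : sizeList [] = 0 := by
  simp [sizeList]

@[simp]
theorem sizeList_node_cons (cs ts : List PTree) :
    sizeList (node cs :: ts) = sizeList cs + sizeList ts + 1 := by
  simp only [sizeList, size]
  ring

theorem sizeList_eq_zero {l : List PTree} : sizeList l = 0 ↔ l = [] := by
  cases l with
  | nil => simp
  | cons t ts => cases t; simp

theorem finite_setOf_sizeList_le (n : ℕ) : {l : List PTree | sizeList l ≤ n}.Finite := by
  induction n with
  | zero => simp [sizeList_eq_zero]
  | succ n ih =>
    refine ((ih.prod ih).image fun p => node p.1 :: p.2).insert [] |>.subset ?_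
    rintro (_ | ⟨⟨cs⟩, ts⟩) hl
    · simp
    · simp only [Set.mem_ofPred_eq, sizeList_node_cons] at hl
      exact Or.inr ⟨(cs, ts), ⟨by simp only [Set.mem_ofPred_eq]; omega,
        by simp only [Set.mem_ofPred_eq]; omega⟩, rfl⟩

theorem finite_setOf_sizeList_eq (n : ℕ) : {l : List PTree | sizeList l = n}.Finite :=
  (finite_setOf_sizeList_le n).subset fun _ hl => le_of_eq hl

noncomputable def forestsOfSize (n : ℕ) : Finset (List PTree) :=
  (finite_setOf_sizeList_eq n).toFinset

@[simp]
theorem mem_forestsOfSize {n : ℕ} {l : List PTree} : l ∈ forestsOfSize n ↔ sizeList l = n := by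
  simp [forestsOfSize]

theorem finsum_sizeList_eq_sum_forestsOfSize {M : Type*} [AddCommMonoid M]
    (f : List PTree → M) (n : ℕ) :
    ∑ᶠ F : {l : List PTree // sizeList l = n}, f F = ∑ l ∈ forestsOfSize n, f l :=
  (finsum_set_coe_eq_finsum_mem {l | sizeList l = n}).trans
    (finsum_mem_eq_finite_toFinset_sum f (finite_setOf_sizeList_eq n))

theorem forestsOfSize_zero : forestsOfSize 0 = {[]} := by
  ext l
  simp [sizeList_eq_zero]

theorem sum_forestsOfSize_succ {M : Type*} [AddCommMonoid M] (f : List PTree → M) (n : ℕ) :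
    ∑ l ∈ forestsOfSize (n + 1), f l =
      ∑ p ∈ antidiagonal n, ∑ cs ∈ forestsOfSize p.1, ∑ ts ∈ forestsOfSize p.2,
        f (node cs :: ts) := by
  simp_rw [← sum_product']
  rw [sum_sigma']
  symm
  refine sum_bij (fun x _ => node x.2.1 :: x.2.2) ?_ ?_ ?_ fun _ _ => rfl
  · rintro ⟨p, cs, ts⟩ hx
    simp only [mem_sigma, mem_product, mem_forestsOfSize, HasAntidiagonal.mem_antidiagonal] at hx
    simp only [mem_forestsOfSize, sizeList_node_cons]
    omega
  · rintro ⟨p, cs, ts⟩ hx ⟨p', cs', ts'⟩ hx' h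
    simp only [mem_sigma, mem_product, mem_forestsOfSize, HasAntidiagonal.mem_antidiagonal] at hx hx'
    simp only [List.cons.injEq, node.injEq] at h
    obtain ⟨rfl, rfl⟩ := h
    obtain rfl : p = p' := Prod.ext (hx.2.1.symm.trans hx'.2.1) (hx.2.2.symm.trans hx'.2.2)
    rfl
  · rintro (_ | ⟨⟨cs⟩, ts⟩) hl
    · simp at hl
    · refine ⟨⟨(sizeList cs, sizeList ts), cs, ts⟩, ?_, rfl⟩
      simp only [mem_forestsOfSize, sizeList_node_cons] at hl
      simpa [HasAntidiagonal.mem_antidiagonal] using hl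

theorem hooks_node (cs : List PTree) : hooks (node cs) = (sizeList cs).succPNat ::ₘ hooksList cs :=
  rfl

noncomputable def bernoulliWeight (l : List PTree) : ℚ :=
  ((hooksList l).map fun h : ℕ+ => bernoulli h).prod

@[simp]
theorem bernoulliWeight_nil : bernoulliWeight [] = 1 := by
  simp [bernoulliWeight, hooksList]

theorem bernoulliWeight_node_cons (cs ts : List PTree) :
    bernoulliWeight (node cs :: ts) =
      bernoulli (sizeList cs + 1) * bernoulliWeight cs * bernoulliWeight ts := by
  simp only [bernoulliWeight, hooksList, hooks_node, Multiset.map_add, Multiset.map_cons,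
    Multiset.prod_add, Multiset.prod_cons, Nat.succPNat_coe, mul_assoc]

noncomputable def bernoulliWeightSum (n : ℕ) : ℚ :=
  ∑ l ∈ forestsOfSize n, bernoulliWeight l

theorem bernoulliWeightSum_zero : bernoulliWeightSum 0 = 1 := by
  simp [bernoulliWeightSum, forestsOfSize_zero]

theorem bernoulliWeightSum_succ (n : ℕ) :
    bernoulliWeightSum (n + 1) = ∑ p ∈ antidiagonal n,
      bernoulli (p.1 + 1) * bernoulliWeightSum p.1 * bernoulliWeightSum p.2 := by
  rw [bernoulliWeightSum, sum_forestsOfSize_succ]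
  refine sum_congr rfl fun p _ => ?_
  rw [bernoulliWeightSum, bernoulliWeightSum, mul_assoc, sum_mul_sum, mul_sum]
  refine sum_congr rfl fun cs hcs => ?_
  rw [mul_sum]
  refine sum_congr rfl fun ts _ => ?_
  rw [bernoulliWeight_node_cons, mem_forestsOfSize.mp hcs, mul_assoc]

theorem bernoulliWeightSum_eq (n : ℕ) :
    bernoulliWeightSum n = (-1) ^ n / (n + 1)! := by
  induction n using Nat.strong_induction_on with
  | _ n ih =>
    cases n with
    | zero => simp [bernoulliWeightSum_zero]
    | succ n =>
      have hsplit : ∀ p ∈ antidiagonal n,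
          bernoulli (p.1 + 1) * bernoulliWeightSum p.1 * bernoulliWeightSum p.2 =
            (-1) ^ n * (bernoulli (p.1 + 1) / ((p.1 + 1)! * (p.2 + 1)!)) := by
        intro p hp
        have hp' := HasAntidiagonal.mem_antidiagonal.mp hp
        rw [ih p.1 (by omega), ih p.2 (by omega), ← hp', pow_add]
        field_simp
      rw [bernoulliWeightSum_succ, sum_congr rfl hsplit, ← mul_sum,
        sum_antidiagonal_bernoulli_succ_div_factorial, pow_succ]
      ring

end PTree

/-- The Bernoulli number hook length formula for plane forests. -/
theorem bernoulli_hook_formula_plane_forests (n : ℕ) (hn : 1 ≤ n) :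
    ∑ᶠ F : {l : List PTree // PTree.sizeList l = n},
      (PTree.hooksList (F : List PTree) |>.map fun h => bernoulli (h : ℕ)).prod
    = (-1 : ℚ) ^ n / ((n + 1).factorial : ℚ) := by
  -- `(h : ℕ)` coerces the whole multiset `hooksList F` to `Multiset ℕ` via `Multiset.bind`.
  simp only [Multiset.pure_def, Multiset.bind_def, Multiset.bind_singleton, Multiset.map_map,
    Function.comp_def]
  exact (PTree.finsum_sizeList_eq_sum_forestsOfSize PTree.bernoulliWeight n).trans
    (PTree.bernoulliWeightSum_eq n)
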